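/- Let Ω be a Cantor group and T : Ω → Ω a minimal translation. Then the set P of periodic sampling functions, i.e., the set of f ∈ C(Ω,ℝ) for which there exists p ∈ ℕ, p ≥ 1, with f(T^pω) = f(ω) for every ω ∈ Ω, is dense in C(Ω,ℝ) with respect to the supremum norm. -/

import Mathlib

/-!
Every neighbourhood of `0` in a compact totally disconnected group contains an open subgroup `H`,
and `H` has finite index `n`, so `n • α ∈ H` for every `α`. Taking `H` so small that `f` varies by
less than `ε` on each coset, the function that evaluates `f` at a fixed representative of the coset
of its argument is continuous (the quotient is discrete), `ε`-close to `f`, and invariant under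
`H`; in particular it is `n`-periodic for the translation by `α`.
-/

namespace ContinuousMap

section Sampling

variable {G X : Type*} [TopologicalSpace G] [AddCommGroup G] [ContinuousAdd G]
  [TopologicalSpace X]

noncomputable def sampleOnCosets (f : C(G, X)) (H : OpenAddSubgroup G) : C(G, X) where
  toFun x := f (QuotientAddGroup.mk (s := H.toAddSubgroup) x).out
  continuous_toFun :=
    (continuous_of_discreteTopology (f := fun q : G ⧸ H.toAddSubgroup ↦ f q.out)).comp
      continuous_quot_mk

theorem sampleOnCosets_apply (f : C(G, X)) (H : OpenAddSubgroup G) (x : G) :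
    f.sampleOnCosets H x = f (QuotientAddGroup.mk (s := H.toAddSubgroup) x).out :=
  rfl

theorem sampleOnCosets_apply_eq_of_sub_mem (f : C(G, X)) {H : OpenAddSubgroup G} {x y : G}
    (h : x - y ∈ H) : f.sampleOnCosets H x = f.sampleOnCosets H y := by
  have hxy : (x : G ⧸ H.toAddSubgroup) = y := by
    rw [QuotientAddGroup.eq, neg_add_eq_sub, ← neg_sub]
    exact H.neg_mem h
  rw [sampleOnCosets_apply, sampleOnCosets_apply, hxy]

theorem sampleOnCosets_add_index_nsmul (f : C(G, X)) (H : OpenAddSubgroup G) (x a : G) :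
    f.sampleOnCosets H (x + H.toAddSubgroup.index • a) = f.sampleOnCosets H x :=
  f.sampleOnCosets_apply_eq_of_sub_mem <| by
    simpa only [add_sub_cancel_left] using
      OpenAddSubgroup.mem_toAddSubgroup.mp (H.toAddSubgroup.nsmul_index_mem a)

theorem dist_sampleOnCosets_lt [CompactSpace G] {E : Type*} [PseudoMetricSpace E] (f : C(G, E))
    {H : OpenAddSubgroup G} {ε : ℝ} (hε : 0 < ε)
    (hf : ∀ x y, x - y ∈ H → dist (f x) (f y) < ε) : dist (f.sampleOnCosets H) f < ε := by
  refine (dist_lt_iff hε).mpr fun x ↦ ?_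
  rw [sampleOnCosets_apply]
  refine hf _ _ ?_
  have hx := QuotientAddGroup.eq.mp (QuotientAddGroup.out_eq' (x : G ⧸ H.toAddSubgroup))
  rwa [neg_add_eq_sub, ← neg_sub, OpenAddSubgroup.mem_toAddSubgroup, neg_mem_iff] at hx

end Sampling

theorem exists_openAddSubgroup_forall_sub_mem_dist_lt {G E : Type*} [TopologicalSpace G]
    [AddCommGroup G] [IsTopologicalAddGroup G] [CompactSpace G] [TotallyDisconnectedSpace G]
    [PseudoMetricSpace E] (f : C(G, E)) {ε : ℝ} (hε : 0 < ε) :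
    ∃ H : OpenAddSubgroup G, ∀ x y, x - y ∈ H → dist (f x) (f y) < ε := by
  let _ : UniformSpace G := IsTopologicalAddGroup.rightUniformSpace G
  have hf : UniformContinuous f := CompactSpace.uniformContinuous_of_continuous f.continuous
  have hU : {p : G × G | dist (f p.1) (f p.2) < ε} ∈ uniformity G := hf (Metric.dist_mem_uniformity hε)
  rw [uniformity_eq_comap_nhds_zero G, Filter.mem_comap] at hU
  obtain ⟨U, hU0, hUε⟩ := hU
  obtain ⟨V, hVU, hVopen, hV0⟩ := mem_nhds_iff.mp hU0
  obtain ⟨H, hHV⟩ :=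
    ProfiniteGrp.exist_openNormalAddSubgroup_sub_open_nhds_of_zero hVopen hV0
  refine ⟨H.toOpenAddSubgroup, fun x y hxy ↦ ?_⟩
  rw [dist_comm]
  exact hUε (show (y, x).2 - (y, x).1 ∈ U from hVU (hHV hxy))

end ContinuousMap

theorem statement16
    (Ω : Type*) [TopologicalSpace Ω] [AddCommGroup Ω] [IsTopologicalAddGroup Ω]
    [CompactSpace Ω] [TotallyDisconnectedSpace Ω]
    (α : Ω) :
    Dense {f : C(Ω, ℝ) | ∃ p : ℕ, 1 ≤ p ∧ ∀ ω : Ω, f (ω + p • α) = f ω} := by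
  refine Metric.dense_iff.mpr fun f r hr ↦ ?_
  obtain ⟨H, hH⟩ := f.exists_openAddSubgroup_forall_sub_mem_dist_lt hr
  refine ⟨f.sampleOnCosets H, f.dist_sampleOnCosets_lt hr hH, H.toAddSubgroup.index,
    Nat.one_le_iff_ne_zero.mpr AddSubgroup.index_ne_zero_of_finite,
    fun ω ↦ f.sampleOnCosets_add_index_nsmul H ω α⟩
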